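/- arXiv:1608.04591 — 2 statements merged into one kernel-verified Lean document; each statement's English description precedes it below -/
import Mathlib

section
/- If α = (√5 − 1)/2 (the golden ratio conjugate), then liminf over positive integers q of q·‖qα‖ equals 1/√5. -/
/-! Write ψ = (1 - √5)/2, so that the number in question is -ψ. For an integer p and q ≥ 1,
`(qψ - p)(qφ - p) = p² - pq - q²` is a nonzero integer (φ and ψ are irrational), and
`qφ - p = (qψ - p) + q√5`; so `d = |qψ - p|` satisfies `d (d + q√5) ≥ 1`, which forces
`q d ≥ (1 - 1/q²)/√5`. In the other direction the Fibonacci numbers satisfy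
`F (n+1) ψ + F n = ψ^(n+1)`, so `F n ‖F n ψ‖ ≤ F n |ψ|^n`, and this tends to `1/√5` by Binet's formula. -/

/-- Distance from a real number to the nearest integer. -/
noncomputable def distNearestInt (t : ℝ) : ℝ := ⨅ n : ℤ, |t - n|

open Filter Topology Real
open scoped goldenRatio

lemma liminf_eq_of_eventually_ge_of_le_comp {α β : Type*} {f : Filter α} {l : Filter β}
    [l.NeBot] {u lo : α → ℝ} {g : β → α} {hi : β → ℝ} {L : ℝ}
    (hlo : Tendsto lo f (𝓝 L)) (hlo_le : ∀ᶠ x in f, lo x ≤ u x)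
    (hg : Tendsto g l f) (hhi : Tendsto hi l (𝓝 L)) (hle_hi : ∀ᶠ y in l, u (g y) ≤ hi y) :
    liminf u f = L := by
  have hfreq : ∀ ε > 0, ∃ᶠ x in f, u x ≤ L + ε := fun ε hε =>
    hg.frequently <| Eventually.frequently <|
      (hle_hi.and (hhi.eventually (ge_mem_nhds (lt_add_of_pos_right L hε)))).mono
        fun _ h => h.1.trans h.2
  have hbdd : IsBoundedUnder (· ≥ ·) f u := hlo.isBoundedUnder_ge.mono_ge hlo_le
  have hcobdd : IsCoboundedUnder (· ≥ ·) f u := .of_frequently_le (hfreq 1 one_pos)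
  refine le_antisymm (le_of_forall_pos_le_add fun ε hε =>
    liminf_le_of_frequently_le (hfreq ε hε) hbdd) (le_of_forall_pos_le_add fun ε hε => ?_)
  rw [← sub_le_iff_le_add]
  exact le_liminf_of_le hcobdd <|
    (hlo_le.and (hlo.eventually (le_mem_nhds (sub_lt_self L hε)))).mono fun _ h => h.2.trans h.1

lemma distNearestInt_le (t : ℝ) (m : ℤ) : distNearestInt t ≤ |t - m| :=
  ciInf_le ⟨0, by rintro _ ⟨n, rfl⟩; exact abs_nonneg _⟩ m

lemma distNearestInt_eq_abs_sub_round (t : ℝ) : distNearestInt t = |t - round t| :=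
  (distNearestInt_le t _).antisymm (le_ciInf (round_le t))

lemma distNearestInt_neg (t : ℝ) : distNearestInt (-t) = distNearestInt t := by
  unfold distNearestInt
  rw [← (Equiv.neg ℤ).iInf_comp]
  congr! 2 with n
  rw [Equiv.neg_apply, Int.cast_neg, ← abs_neg]
  ring_nf

lemma distNearestInt_fib_mul_goldenConj_le (n : ℕ) :
    distNearestInt (Nat.fib n * ψ) ≤ |ψ| ^ n := by
  cases n with
  | zero => simpa using (distNearestInt_le 0 0).trans (by norm_num)
  | succ n =>
    calc distNearestInt (Nat.fib (n + 1) * ψ) ≤ |Nat.fib (n + 1) * ψ - (-Nat.fib n : ℤ)| :=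
          distNearestInt_le _ _
      _ = |ψ| ^ (n + 1) := by
          rw [Int.cast_neg, Int.cast_natCast, sub_neg_eq_add, mul_comm,
            goldenConj_mul_fib_succ_add_fib, abs_pow]

lemma tendsto_fib_mul_abs_goldenConj_pow :
    Tendsto (fun n : ℕ => Nat.fib n * |ψ| ^ n) atTop (𝓝 (1 / √5)) := by
  have habs : |ψ| = -ψ := abs_of_neg goldenConj_neg
  have hrewrite : ∀ n : ℕ, Nat.fib n * |ψ| ^ n = (1 - (-ψ ^ 2) ^ n) / √5 := fun n => by
    rw [coe_fib_eq, div_mul_eq_mul_div, sub_mul, ← mul_pow, ← mul_pow, habs,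
      show φ * -ψ = 1 by rw [mul_neg, goldenRatio_mul_goldenConj, neg_neg], one_pow, sq, mul_neg]
  have hlt : |-ψ ^ 2| < 1 := by
    rw [abs_neg, abs_pow]
    exact pow_lt_one₀ (abs_nonneg ψ)
      (abs_lt.2 ⟨neg_one_lt_goldenConj, goldenConj_neg.trans one_pos⟩) two_ne_zero
  simp_rw [hrewrite]
  simpa using ((tendsto_pow_atTop_nhds_zero_of_abs_lt_one hlt).const_sub 1).div_const √5

lemma tendsto_fib_atTop : Tendsto Nat.fib atTop atTop :=
  Nat.fib_mono.tendsto_atTop_atTop fun n => ⟨n + 1, by have := Nat.le_fib_add_one (n + 1); omega⟩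

lemma one_le_abs_mul_goldenConj_sub_mul_mul_goldenRatio_sub (p : ℤ) {q : ℤ} (hq : q ≠ 0) :
    1 ≤ |(q * ψ - p) * (q * φ - p)| := by
  have hprod : (q * ψ - p) * (q * φ - p) = ((p ^ 2 - p * q - q ^ 2 : ℤ) : ℝ) := by
    push_cast
    linear_combination
      (q : ℝ) ^ 2 * goldenRatio_mul_goldenConj - (p * q : ℝ) * goldenRatio_add_goldenConj
  have hne : p ^ 2 - p * q - q ^ 2 ≠ 0 := by
    intro h
    rw [h, Int.cast_zero] at hprod
    rcases mul_eq_zero.1 hprod with h | h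
    · exact (goldenConj_irrational.intCast_mul hq).ne_int p (sub_eq_zero.1 h)
    · exact (goldenRatio_irrational.intCast_mul hq).ne_int p (sub_eq_zero.1 h)
  rw [hprod, ← Int.cast_abs]
  exact_mod_cast Int.one_le_abs hne

lemma one_sub_one_div_sq_div_sqrt_five_le (p : ℤ) {q : ℕ} (hq : 0 < q) :
    (1 - (1 / q) ^ 2) / √5 ≤ q * |q * ψ - p| := by
  set d := |q * ψ - p|
  have hq' : (0 : ℝ) < q := Nat.cast_pos.2 hq
  have hsqrt5 : 1 < √5 := by rw [lt_sqrt zero_le_one]; norm_num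
  have hkey : 1 ≤ d * (d + q * √5) :=
    calc 1 ≤ |(q * ψ - p) * (q * φ - p)| := by
          exact_mod_cast
            one_le_abs_mul_goldenConj_sub_mul_mul_goldenRatio_sub p (q := q) (by omega)
      _ = d * |q * ψ - p + q * √5| := by
          rw [abs_mul, ← goldenRatio_sub_goldenConj, mul_sub, sub_add_sub_cancel']
      _ ≤ d * (d + q * √5) := by
          gcongr
          exact (abs_add_le _ _).trans_eq
            (by rw [abs_of_nonneg (by positivity : (0 : ℝ) ≤ q * √5)])
  rcases le_or_gt 1 (q * d) with hlarge | hsmall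
  · calc (1 - (1 / q) ^ 2) / √5 ≤ 1 := by
          rw [div_le_one (by positivity)]; nlinarith [sq_nonneg (1 / (q : ℝ))]
      _ ≤ q * d := hlarge
  · have hd : d ≤ 1 / q := by rw [le_div_iff₀ hq']; linarith
    have hd2 : d ^ 2 ≤ (1 / q) ^ 2 := pow_le_pow_left₀ (abs_nonneg _) hd 2
    rw [div_le_iff₀ (by positivity)]
    nlinarith

theorem golden_ratio_liminf :
    Filter.liminf
      (fun q : ℕ => (q : ℝ) * distNearestInt (q * ((Real.sqrt 5 - 1) / 2)))
      Filter.atTop = 1 / Real.sqrt 5 := by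
  have hα : ∀ q : ℕ, (q : ℝ) * ((√5 - 1) / 2) = -(q * ψ) := fun q => by rw [goldenConj]; ring
  simp_rw [hα, distNearestInt_neg]
  have hlo : Tendsto (fun q : ℕ => (1 - (1 / (q : ℝ)) ^ 2) / √5) atTop (𝓝 (1 / √5)) := by
    simpa using ((tendsto_one_div_atTop_nhds_zero_nat.pow 2).const_sub 1).div_const √5
  refine liminf_eq_of_eventually_ge_of_le_comp hlo ?_ tendsto_fib_atTop
    tendsto_fib_mul_abs_goldenConj_pow (.of_forall fun n => ?_)
  · filter_upwards [eventually_gt_atTop 0] with q hq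
    rw [distNearestInt_eq_abs_sub_round]
    exact one_sub_one_div_sq_div_sqrt_five_le _ hq
  · exact mul_le_mul_of_nonneg_left (distNearestInt_fib_mul_goldenConj_le n) (Nat.cast_nonneg _)
end

section
/- Let Δ be an admissible triangle with side quantities α, β, γ as above, m their minimum and M their maximum. If area(Δ) ≤ √2·m, then (1/2)·√(M² + 4m²) ≤ area(Δ). -/
/-- `N(z)² = |Re z · Im z|`. -/
noncomputable def Nsq (z : ℂ) : ℝ := |z.re * z.im|

/-- Area of the triangle with vertices `p, q, r`. -/
noncomputable def triArea (p q r : ℂ) : ℝ :=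
  |(q - p).re * (r - p).im - (q - p).im * (r - p).re| / 2

/-- A triangle is admissible if its three vertices lie on the boundary of its
minimal axis-parallel bounding rectangle, with no two on the same side. -/
def AdmissibleTriangle (p q r : ℂ) : Prop :=
  (p.re ≠ q.re ∧ q.re ≠ r.re ∧ p.re ≠ r.re) ∧
  (p.im ≠ q.im ∧ q.im ≠ r.im ∧ p.im ≠ r.im) ∧
  ∀ v ∈ ({p, q, r} : Set ℂ),
    v.re = min (min p.re q.re) r.re ∨ v.re = max (max p.re q.re) r.re ∨
    v.im = min (min p.im q.im) r.im ∨ v.im = max (max p.im q.im) r.im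


lemma case_mz (x y z S : ℝ) (hz : 0 < z) (hzx : z ≤ x) (hzy : z ≤ y)
    (hSsq : S^2 = (x+y+z)^2 - 4*x*y) (h8 : S^2 ≤ 8*z^2) :
    y^2 + 4*z^2 ≤ S^2 := by
  have hA : (0:ℝ) ≤ x - z := by linarith
  have hH3 : (x-y)^2 + 2*z*(x+y) ≤ 7*z^2 := by nlinarith [h8, hSsq]
  by_cases hT : 2*y - x - 3*z ≤ 0
  · nlinarith [mul_nonneg hA (by linarith : (0:ℝ) ≤ x + 3*z - 2*y)]
  · exfalso
    push_neg at hT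
    nlinarith [hH3, sq_nonneg (x - y + z), mul_nonneg hz.le hA, mul_pos hz hT]

lemma alg (x y z m M S : ℝ) (hx : 0 < x) (hy : 0 < y) (hz : 0 < z)
    (hm : m = min (min x y) z) (hM : M = max (max x y) z)
    (hS0 : 0 ≤ S) (hSsq : S^2 = (x+y+z)^2 - 4*x*y)
    (hcond : S/2 ≤ Real.sqrt 2 * m) :
    Real.sqrt (M^2 + 4*m^2) / 2 ≤ S/2 := by
  have hm0 : 0 < m := by rw [hm]; exact lt_min (lt_min hx hy) hz
  have h8 : S^2 ≤ 8*m^2 := by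
    have h2 : S ≤ 2*(Real.sqrt 2 * m) := by linarith
    have h3 := mul_self_le_mul_self hS0 h2
    have hs2 : Real.sqrt 2 * Real.sqrt 2 = 2 := Real.mul_self_sqrt (by norm_num)
    have h4 : (2*(Real.sqrt 2 * m))*(2*(Real.sqrt 2 * m)) = 8*m^2 := by
      rw [show (2*(Real.sqrt 2 * m))*(2*(Real.sqrt 2 * m))
          = (Real.sqrt 2*Real.sqrt 2)*(4*m^2) by ring, hs2]; ring
    rw [h4] at h3; nlinarith [h3]
  have hmx : m ≤ x := by rw [hm]; exact le_trans (min_le_left _ _) (min_le_left _ _)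
  have hmy : m ≤ y := by rw [hm]; exact le_trans (min_le_left _ _) (min_le_right _ _)
  have hmz : m ≤ z := by rw [hm]; exact min_le_right _ _
  have hMx : x ≤ M := by rw [hM]; exact le_trans (le_max_left _ _) (le_max_left _ _)
  have hMy : y ≤ M := by rw [hM]; exact le_trans (le_max_right _ _) (le_max_left _ _)
  have hMz : z ≤ M := by rw [hM]; exact le_max_right _ _
  have hmm : m = x ∨ m = y ∨ m = z := by
    rcases min_cases (min x y) z with ⟨h1, _⟩ | ⟨h1, _⟩
    · rcases min_cases x y with ⟨h2, _⟩ | ⟨h2, _⟩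
      · left; rw [hm, h1, h2]
      · right; left; rw [hm, h1, h2]
    · right; right; rw [hm, h1]
  have hMM : M = x ∨ M = y ∨ M = z := by
    rcases max_cases (max x y) z with ⟨h1, _⟩ | ⟨h1, _⟩
    · rcases max_cases x y with ⟨h2, _⟩ | ⟨h2, _⟩
      · left; rw [hM, h1, h2]
      · right; left; rw [hM, h1, h2]
    · right; right; rw [hM, h1]
  have hkey : M^2 + 4*m^2 ≤ S^2 := by
    rcases hmm with hm1 | hm1 | hm1 <;> rcases hMM with hM1 | hM1 | hM1 <;>
      rw [hm1] at hmx hmy hmz h8 ⊢ <;> rw [hM1] at hMx hMy hMz ⊢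
    · have ey : y = x := le_antisymm hMy hmy
      have ez : z = x := le_antisymm hMz hmz
      rw [ey, ez] at hSsq; nlinarith [hSsq]
    · nlinarith [mul_nonneg (by linarith : (0:ℝ) ≤ z - x) (by linarith : (0:ℝ) ≤ z + 3*x),
        mul_nonneg (by linarith : (0:ℝ) ≤ z - x) hy.le]
    · nlinarith [mul_nonneg hx.le (by linarith : (0:ℝ) ≤ z - y),
        mul_nonneg hy.le (by linarith : (0:ℝ) ≤ z - y), sq_nonneg (y - x)]
    · nlinarith [mul_nonneg (by linarith : (0:ℝ) ≤ z - y) (by linarith : (0:ℝ) ≤ z + 3*y),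
        mul_nonneg (by linarith : (0:ℝ) ≤ z - y) hx.le]
    · have ex : x = y := le_antisymm hMx hmx
      have ez : z = y := le_antisymm hMz hmz
      rw [ex, ez] at hSsq; nlinarith [hSsq]
    · nlinarith [mul_nonneg hy.le (by linarith : (0:ℝ) ≤ z - x),
        mul_nonneg hx.le (by linarith : (0:ℝ) ≤ z - x), sq_nonneg (x - y)]
    · exact case_mz y x z S hz hmy hmx (by linarith [hSsq]) h8
    · exact case_mz x y z S hz hmx hmy hSsq h8
    · have ex : x = z := le_antisymm hMx hmx
      have ey : y = z := le_antisymm hMy hmy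
      rw [ex, ey] at hSsq; nlinarith [hSsq]
  have hfin : Real.sqrt (M^2 + 4*m^2) ≤ S := by
    rw [show S = Real.sqrt (S^2) from (Real.sqrt_sq hS0).symm]
    exact Real.sqrt_le_sqrt hkey
  linarith

lemma algAbs (w b c h m M : ℝ) (hc : 0 < c) (hcw : c < w) (hb : 0 < b) (hbh : b < h)
    (hm : m = min (min |w*b| |c*h|) |(c-w)*(h-b)|)
    (hM : M = max (max |w*b| |c*h|) |(c-w)*(h-b)|)
    (har : |w*h - b*c|/2 ≤ Real.sqrt 2 * m) :
    Real.sqrt (M^2 + 4*m^2) / 2 ≤ |w*h - b*c|/2 := by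
  have hw : 0 < w := hc.trans hcw
  have hh : 0 < h := hb.trans hbh
  have e1 : |w*b| = w*b := abs_of_pos (mul_pos hw hb)
  have e2 : |c*h| = c*h := abs_of_pos (mul_pos hc hh)
  have e3 : |(c-w)*(h-b)| = (w-c)*(h-b) := by
    rw [show (c-w)*(h-b) = -((w-c)*(h-b)) by ring, abs_neg]
    exact abs_of_pos (mul_pos (by linarith) (by linarith))
  have hS : 0 < w*h - b*c := by nlinarith [mul_pos (sub_pos.2 hcw) hh, mul_pos hc (sub_pos.2 hbh)]
  have eS : |w*h - b*c| = w*h - b*c := abs_of_pos hS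
  rw [e1, e2, e3] at hm hM
  rw [eS] at har ⊢
  exact alg (w*b) (c*h) ((w-c)*(h-b)) m M (w*h - b*c) (mul_pos hw hb) (mul_pos hc hh)
    (mul_pos (by linarith) (by linarith)) hm hM hS.le (by ring) har

lemma coreR (w b c h m M : ℝ)
    (hx : (0 < c ∧ c < w) ∨ (w < c ∧ c < 0)) (hy : (0 < b ∧ b < h) ∨ (h < b ∧ b < 0))
    (hm : m = min (min |w*b| |c*h|) |(c-w)*(h-b)|)
    (hM : M = max (max |w*b| |c*h|) |(c-w)*(h-b)|)
    (har : |w*h - b*c|/2 ≤ Real.sqrt 2 * m) :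
    Real.sqrt (M^2 + 4*m^2) / 2 ≤ |w*h - b*c|/2 := by
  rcases hx with ⟨h1, h2⟩ | ⟨h1, h2⟩ <;> rcases hy with ⟨h3, h4⟩ | ⟨h3, h4⟩
  · exact algAbs w b c h m M h1 h2 h3 h4 hm hM har
  · have r1 : |w*(-b)| = |w*b| := by rw [show w*(-b) = -(w*b) by ring, abs_neg]
    have r2 : |c*(-h)| = |c*h| := by rw [show c*(-h) = -(c*h) by ring, abs_neg]
    have r3 : |(c-w)*((-h)-(-b))| = |(c-w)*(h-b)| := by
      rw [show (c-w)*((-h)-(-b)) = -((c-w)*(h-b)) by ring, abs_neg]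
    have r4 : |w*(-h) - (-b)*c| = |w*h - b*c| := by
      rw [show w*(-h) - (-b)*c = -(w*h - b*c) by ring, abs_neg]
    have := algAbs w (-b) c (-h) m M h1 h2 (by linarith) (by linarith)
      (by rw [r1, r2, r3]; exact hm) (by rw [r1, r2, r3]; exact hM) (by rw [r4]; exact har)
    rw [r4] at this; exact this
  · have r1 : |(-w)*b| = |w*b| := by rw [show (-w)*b = -(w*b) by ring, abs_neg]
    have r2 : |(-c)*h| = |c*h| := by rw [show (-c)*h = -(c*h) by ring, abs_neg]
    have r3 : |((-c)-(-w))*(h-b)| = |(c-w)*(h-b)| := by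
      rw [show ((-c)-(-w))*(h-b) = -((c-w)*(h-b)) by ring, abs_neg]
    have r4 : |(-w)*h - b*(-c)| = |w*h - b*c| := by
      rw [show (-w)*h - b*(-c) = -(w*h - b*c) by ring, abs_neg]
    have := algAbs (-w) b (-c) h m M (by linarith) (by linarith) h3 h4
      (by rw [r1, r2, r3]; exact hm) (by rw [r1, r2, r3]; exact hM) (by rw [r4]; exact har)
    rw [r4] at this; exact this
  · have r1 : |(-w)*(-b)| = |w*b| := by rw [show (-w)*(-b) = w*b by ring]
    have r2 : |(-c)*(-h)| = |c*h| := by rw [show (-c)*(-h) = c*h by ring]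
    have r3 : |((-c)-(-w))*((-h)-(-b))| = |(c-w)*(h-b)| := by
      rw [show ((-c)-(-w))*((-h)-(-b)) = (c-w)*(h-b) by ring]
    have r4 : |(-w)*(-h) - (-b)*(-c)| = |w*h - b*c| := by
      rw [show (-w)*(-h) - (-b)*(-c) = w*h - b*c by ring]
    have := algAbs (-w) (-b) (-c) (-h) m M (by linarith) (by linarith) (by linarith) (by linarith)
      (by rw [r1, r2, r3]; exact hm) (by rw [r1, r2, r3]; exact hM) (by rw [r4]; exact har)
    rw [r4] at this; exact this

lemma keyC (p q r : ℂ) (m M : ℝ)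
    (hbx : (p.re < r.re ∧ r.re < q.re) ∨ (q.re < r.re ∧ r.re < p.re))
    (hby : (p.im < q.im ∧ q.im < r.im) ∨ (r.im < q.im ∧ q.im < p.im))
    (hm : m = min (min (Nsq (q-p)) (Nsq (p-r))) (Nsq (r-q)))
    (hM : M = max (max (Nsq (q-p)) (Nsq (p-r))) (Nsq (r-q)))
    (har : triArea p q r ≤ Real.sqrt 2 * m) :
    Real.sqrt (M^2 + 4*m^2) / 2 ≤ triArea p q r := by
  have n1 : Nsq (q-p) = |(q.re - p.re)*(q.im - p.im)| := by
    simp [Nsq, Complex.sub_re, Complex.sub_im]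
  have n2 : Nsq (p-r) = |(r.re - p.re)*(r.im - p.im)| := by
    simp only [Nsq, Complex.sub_re, Complex.sub_im]
    rw [show (p.re - r.re)*(p.im - r.im) = (r.re - p.re)*(r.im - p.im) by ring]
  have n3 : Nsq (r-q) = |((r.re - p.re)-(q.re - p.re))*((r.im - p.im)-(q.im - p.im))| := by
    simp only [Nsq, Complex.sub_re, Complex.sub_im]
    rw [show (r.re - q.re)*(r.im - q.im)
      = ((r.re - p.re)-(q.re - p.re))*((r.im - p.im)-(q.im - p.im)) by ring]
  have tA : triArea p q r
      = |(q.re - p.re)*(r.im - p.im) - (q.im - p.im)*(r.re - p.re)|/2 := by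
    simp [triArea, Complex.sub_re, Complex.sub_im]
  rw [n1, n2, n3] at hm hM
  rw [tA] at har ⊢
  exact coreR (q.re - p.re) (q.im - p.im) (r.re - p.re) (r.im - p.im) m M
    (by rcases hbx with ⟨a1, a2⟩ | ⟨a1, a2⟩; · left; constructor <;> linarith
        · right; constructor <;> linarith)
    (by rcases hby with ⟨a1, a2⟩ | ⟨a1, a2⟩; · left; constructor <;> linarith
        · right; constructor <;> linarith)
    hm hM har

lemma Nsq_comm (a b : ℂ) : Nsq (a-b) = Nsq (b-a) := by
  simp only [Nsq, Complex.sub_re, Complex.sub_im]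
  rw [show (a.re-b.re)*(a.im-b.im) = -((b.re-a.re)*(a.im-b.im)) by ring, abs_neg,
      show (b.re-a.re)*(a.im-b.im) = -((b.re-a.re)*(b.im-a.im)) by ring, abs_neg]

lemma triArea_swap (p q r : ℂ) : triArea q p r = triArea p q r := by
  simp only [triArea, Complex.sub_re, Complex.sub_im]
  rw [show (p.re-q.re)*(r.im-q.im)-(p.im-q.im)*(r.re-q.re)
      = -((q.re-p.re)*(r.im-p.im)-(q.im-p.im)*(r.re-p.re)) by ring, abs_neg]

lemma triArea_rot (p q r : ℂ) : triArea q r p = triArea p q r := by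
  simp only [triArea, Complex.sub_re, Complex.sub_im]
  rw [show (r.re-q.re)*(p.im-q.im)-(r.im-q.im)*(p.re-q.re)
      = (q.re-p.re)*(r.im-p.im)-(q.im-p.im)*(r.re-p.re) by ring]

lemma min3_rot (a b c : ℝ) : min (min a b) c = min (min c a) b := by
  rw [min_comm (min a b) c, ← min_assoc]

lemma max3_rot (a b c : ℝ) : max (max a b) c = max (max c a) b := by
  rw [max_comm (max a b) c, ← max_assoc]

lemma min3_rot2 (a b c : ℝ) : min (min a b) c = min (min b c) a := by
  rw [min3_rot, min3_rot]

lemma max3_rot2 (a b c : ℝ) : max (max a b) c = max (max b c) a := by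
  rw [max3_rot, max3_rot]

lemma max_right_comm' (a b c : ℝ) : max (max a b) c = max (max a c) b := by
  rw [max_assoc, max_comm b c, ← max_assoc]

lemma keyR (p q r : ℂ) (m M : ℝ)
    (hpq : p.im ≠ q.im) (hqr : q.im ≠ r.im) (hpr : p.im ≠ r.im)
    (hbx : (p.re < r.re ∧ r.re < q.re) ∨ (q.re < r.re ∧ r.re < p.re))
    (hall : r.re = min (min p.re q.re) r.re ∨ r.re = max (max p.re q.re) r.re ∨
            r.im = min (min p.im q.im) r.im ∨ r.im = max (max p.im q.im) r.im)
    (hm : m = min (min (Nsq (q-p)) (Nsq (p-r))) (Nsq (r-q)))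
    (hM : M = max (max (Nsq (q-p)) (Nsq (p-r))) (Nsq (r-q)))
    (har : triArea p q r ≤ Real.sqrt 2 * m) :
    Real.sqrt (M^2 + 4*m^2) / 2 ≤ triArea p q r := by
  have l1 : min (min p.im q.im) r.im ≤ p.im := le_trans (min_le_left _ _) (min_le_left _ _)
  have l2 : min (min p.im q.im) r.im ≤ q.im := le_trans (min_le_left _ _) (min_le_right _ _)
  have u1 : p.im ≤ max (max p.im q.im) r.im := le_trans (le_max_left _ _) (le_max_left _ _)
  have u2 : q.im ≤ max (max p.im q.im) r.im := le_trans (le_max_right _ _) (le_max_left _ _)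
  have lx1 : min (min p.re q.re) r.re ≤ p.re := le_trans (min_le_left _ _) (min_le_left _ _)
  have lx2 : min (min p.re q.re) r.re ≤ q.re := le_trans (min_le_left _ _) (min_le_right _ _)
  have ux1 : p.re ≤ max (max p.re q.re) r.re := le_trans (le_max_left _ _) (le_max_left _ _)
  have ux2 : q.re ≤ max (max p.re q.re) r.re := le_trans (le_max_right _ _) (le_max_left _ _)
  have e1 : Nsq (p - q) = Nsq (q - p) := Nsq_comm _ _
  have e2 : Nsq (q - r) = Nsq (r - q) := Nsq_comm _ _
  have e3 : Nsq (r - p) = Nsq (p - r) := Nsq_comm _ _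
  have tsw : triArea q p r = triArea p q r := triArea_swap _ _ _
  have hm' : m = min (min (Nsq (p-q)) (Nsq (q-r))) (Nsq (r-p)) := by
    rw [e1, e2, e3, min_right_comm]; exact hm
  have hM' : M = max (max (Nsq (p-q)) (Nsq (q-r))) (Nsq (r-p)) := by
    rw [e1, e2, e3, max_right_comm' _ _ _]; exact hM
  have har' : triArea q p r ≤ Real.sqrt 2 * m := by rw [tsw]; exact har
  rcases lt_or_gt_of_ne hpq with h1|h1 <;> rcases lt_or_gt_of_ne hqr with h2|h2 <;>
    rcases lt_or_gt_of_ne hpr with h3|h3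
  · exact keyC p q r m M hbx (Or.inl ⟨h1, h2⟩) hm hM har
  · linarith
  · exfalso
    rcases hbx with ⟨b1, b2⟩|⟨b1, b2⟩ <;> rcases hall with hh|hh|hh|hh <;> linarith
  · rw [← tsw]
    exact keyC q p r m M hbx.symm (Or.inr ⟨h3, h1⟩) hm' hM' har'
  · rw [← tsw]
    exact keyC q p r m M hbx.symm (Or.inl ⟨h1, h3⟩) hm' hM' har'
  · exfalso
    rcases hbx with ⟨b1, b2⟩|⟨b1, b2⟩ <;> rcases hall with hh|hh|hh|hh <;> linarith
  · linarith
  · exact keyC p q r m M hbx (Or.inr ⟨h2, h1⟩) hm hM har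

theorem area_lower_bound_admissible (p q r : ℂ) (h : AdmissibleTriangle p q r)
    (α β γ m M : ℝ)
    (hα : α = Nsq (q - p)) (hβ : β = Nsq (p - r)) (hγ : γ = Nsq (r - q))
    (hm : m = min (min α β) γ) (hM : M = max (max α β) γ)
    (harea : triArea p q r ≤ Real.sqrt 2 * m) :
    Real.sqrt (M^2 + 4*m^2) / 2 ≤ triArea p q r := by
  subst hα hβ hγ
  obtain ⟨⟨hxpq, hxqr, hxpr⟩, ⟨hypq, hyqr, hypr⟩, hall⟩ := h
  -- rotation helpers
  have tE1 : triArea q r p = triArea p q r := triArea_rot _ _ _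
  have tE2 : triArea r p q = triArea p q r := by
    rw [triArea_rot q r p, triArea_rot p q r]
  have hmq : m = min (min (Nsq (p-r)) (Nsq (r-q))) (Nsq (q-p)) := by
    rw [hm, min3_rot2]
  have hMq : M = max (max (Nsq (p-r)) (Nsq (r-q))) (Nsq (q-p)) := by
    rw [hM, max3_rot2]
  have hmp : m = min (min (Nsq (r-q)) (Nsq (q-p))) (Nsq (p-r)) := by
    rw [hm, min3_rot]
  have hMp : M = max (max (Nsq (r-q)) (Nsq (q-p))) (Nsq (p-r)) := by
    rw [hM, max3_rot]
  have hallq : q.re = min (min r.re p.re) q.re ∨ q.re = max (max r.re p.re) q.re ∨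
      q.im = min (min r.im p.im) q.im ∨ q.im = max (max r.im p.im) q.im := by
    have hq := hall q (by simp)
    rwa [min3_rot p.re q.re r.re, max3_rot p.re q.re r.re,
        min3_rot p.im q.im r.im, max3_rot p.im q.im r.im] at hq
  have hallp : p.re = min (min q.re r.re) p.re ∨ p.re = max (max q.re r.re) p.re ∨
      p.im = min (min q.im r.im) p.im ∨ p.im = max (max q.im r.im) p.im := by
    have hp := hall p (by simp)
    rwa [min3_rot2 p.re q.re r.re, max3_rot2 p.re q.re r.re,
        min3_rot2 p.im q.im r.im, max3_rot2 p.im q.im r.im] at hp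
  have hallr := hall r (by simp)
  rcases lt_or_gt_of_ne hxpq with a1|a1 <;> rcases lt_or_gt_of_ne hxqr with a2|a2 <;>
    rcases lt_or_gt_of_ne hxpr with a3|a3
  · -- p<q<r : q is x-middle, use (r,p,q)
    rw [← tE2]
    exact keyR r p q m M hypr.symm hypq hyqr.symm (Or.inr ⟨a1, a2⟩) hallq hmq hMq
      (by rw [tE2]; exact harea)
  · linarith
  · -- p<r<q : r is x-middle
    exact keyR p q r m M hypq hyqr hypr (Or.inl ⟨a3, a2⟩) hallr hm hM harea
  · -- r<p<q : p is x-middle, use (q,r,p)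
    rw [← tE1]
    exact keyR q r p m M hyqr hypr.symm hypq.symm (Or.inr ⟨a3, a1⟩) hallp hmp hMp
      (by rw [tE1]; exact harea)
  · -- q<p<r : p is x-middle, use (q,r,p)
    rw [← tE1]
    exact keyR q r p m M hyqr hypr.symm hypq.symm (Or.inl ⟨a1, a3⟩) hallp hmp hMp
      (by rw [tE1]; exact harea)
  · -- q<r<p : r is x-middle
    exact keyR p q r m M hypq hyqr hypr (Or.inr ⟨a2, a3⟩) hallr hm hM harea
  · linarith
  · -- r<q<p : q is x-middle, use (r,p,q)
    rw [← tE2]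
    exact keyR r p q m M hypr.symm hypq hyqr.symm (Or.inl ⟨a2, a1⟩) hallq hmq hMq
      (by rw [tE2]; exact harea)
end
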